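/- If p is analytic on the unit disk E with p(0) = 1, c > −1 and c + γ > 0 with 0 ≤ γ < 1, p(z) + c ≠ 0 on E, and Re[p(z) + z p'(z)/(c + p(z))] > γ for all z ∈ E, then Re p(z) > γ for all z ∈ E. -/

import Mathlib

/-! A Jack-type argument. If `Re p ≤ γ` somewhere, let `z₀` be a point of least modulus with
`Re p z₀ = γ`. Then `Re p` is minimal at `z₀` on the closed disc of radius `|z₀|`, so the angular
derivative forces `z₀ p'(z₀)` to be real and the radial one makes it `≤ 0`. As
`Re (c + p z₀) = c + γ ≥ 0`, the term `z₀ p'(z₀) / (c + p z₀)` has nonpositive real part, which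
contradicts the hypothesis at `z₀`. -/

open Metric Set Complex

theorem exists_mem_ball_eq_forall_mem_closedBall_le {E : Type*} [NormedAddCommGroup E]
    [NormedSpace ℝ E] [ProperSpace E] {g : E → ℝ} {γ R : ℝ} (hg : ContinuousOn g (ball 0 R))
    (h0 : γ < g 0) {z : E} (hz : z ∈ ball 0 R) (hzγ : g z ≤ γ) :
    ∃ z₀ ∈ ball (0 : E) R, g z₀ = γ ∧ ∀ w ∈ closedBall 0 ‖z₀‖, γ ≤ g w := by
  set T := closedBall (0 : E) ‖z‖ ∩ {w | g w ≤ γ}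
  have hKR : closedBall (0 : E) ‖z‖ ⊆ ball 0 R := closedBall_subset_ball (mem_ball_zero_iff.1 hz)
  have hT : IsCompact T := (isCompact_closedBall _ _).of_isClosed_subset
    ((hg.mono hKR).preimage_isClosed_of_isClosed isClosed_closedBall isClosed_Iic)
    inter_subset_left
  obtain ⟨z₀, ⟨hz₀K, hz₀γ⟩, hz₀min⟩ :=
    hT.exists_isMinOn ⟨z, mem_closedBall_zero_iff.2 le_rfl, hzγ⟩ continuous_norm.continuousOn
  have hz₀R : z₀ ∈ ball (0 : E) R := hKR hz₀K
  have hinner : ∀ w, ‖w‖ < ‖z₀‖ → γ < g w := fun w hw ↦ by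
    by_contra! hwγ
    have hwK : w ∈ closedBall (0 : E) ‖z‖ :=
      mem_closedBall_zero_iff.2 (hw.le.trans (mem_closedBall_zero_iff.1 hz₀K))
    exact hw.not_ge (hz₀min ⟨hwK, hwγ⟩)
  have hz₀ : z₀ ≠ 0 := by rintro rfl; exact hz₀γ.not_gt h0
  have hbound : ∀ w ∈ closedBall 0 ‖z₀‖, γ ≤ g w := fun w hw ↦ by
    rw [mem_closedBall_zero_iff] at hw
    have hwR : w ∈ ball (0 : E) R :=
      mem_ball_zero_iff.2 (hw.trans_lt (mem_ball_zero_iff.1 hz₀R))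
    refine ContinuousWithinAt.closure_le (s := ball 0 ‖z₀‖) ?_ continuousWithinAt_const
      ((hg.continuousAt (isOpen_ball.mem_nhds hwR)).continuousWithinAt)
      fun y hy ↦ (hinner y (mem_ball_zero_iff.1 hy)).le
    rw [closure_ball _ (norm_ne_zero_iff.2 hz₀)]
    exact mem_closedBall_zero_iff.2 hw
  exact ⟨z₀, hz₀R, le_antisymm hz₀γ (hbound z₀ (mem_closedBall_zero_iff.2 le_rfl)), hbound⟩

theorem HasDerivAt.hasFDerivAt_re {f : ℂ → ℂ} {f' z : ℂ} (hf : HasDerivAt f f' z) :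
    HasFDerivAt (fun w ↦ (f w).re)
      (reCLM.comp ((ContinuousLinearMap.smulRight (1 : ℂ →L[ℂ] ℂ) f').restrictScalars ℝ)) z :=
  reCLM.hasFDerivAt.comp z (hf.hasFDerivAt.restrictScalars ℝ)

theorem re_mul_deriv_nonpos_of_isMinOn_closedBall {f : ℂ → ℂ} {z : ℂ}
    (hf : DifferentiableAt ℂ f z) (hmin : IsMinOn (fun w ↦ (f w).re) (closedBall 0 ‖z‖) z) :
    (z * deriv f z).re ≤ 0 := by
  have hseg : segment ℝ z (z + -z) ⊆ closedBall 0 ‖z‖ := by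
    rw [add_neg_cancel]
    exact (convex_closedBall 0 ‖z‖).segment_subset (mem_closedBall_zero_iff.2 le_rfl)
      (mem_closedBall_self (norm_nonneg z))
  simpa using hmin.localize.hasFDerivWithinAt_nonneg
    hf.hasDerivAt.hasFDerivAt_re.hasFDerivWithinAt (mem_posTangentConeAt_of_segment_subset hseg)

theorem im_mul_deriv_eq_zero_of_isMinOn_sphere {f : ℂ → ℂ} {z : ℂ}
    (hf : DifferentiableAt ℂ f z) (hmin : IsMinOn (fun w ↦ (f w).re) (sphere 0 ‖z‖) z) :
    (z * deriv f z).im = 0 := by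
  have hrot : HasDerivAt (fun θ : ℝ ↦ z * exp (θ * I)) (z * I) 0 := by
    simpa using ((((hasDerivAt_id (0 : ℝ)).ofReal_comp).mul_const I).cexp).const_mul z
  have hf' : HasDerivAt f (deriv f z) (z * exp ((0 : ℝ) * I)) := by simpa using hf.hasDerivAt
  have hcomp := hf'.hasFDerivAt_re.comp_hasDerivAt (0 : ℝ) hrot
  have hloc : IsLocalMin (fun θ : ℝ ↦ (f (z * exp (θ * I))).re) 0 :=
    Filter.Eventually.of_forall fun θ ↦ by
      simpa using hmin (by simp [norm_exp_ofReal_mul_I] : z * exp (θ * I) ∈ sphere 0 ‖z‖)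
  have hderiv := hloc.hasDerivAt_eq_zero hcomp
  simp only [ContinuousLinearMap.coe_comp, Function.comp_apply,
    ContinuousLinearMap.coe_restrictScalars', ContinuousLinearMap.smulRight_apply,
    one_apply_eq_self, smul_eq_mul, reCLM_apply, mul_re, mul_im, I_re, I_im] at hderiv
  rw [mul_im]
  linarith

theorem re_div_nonpos_of_im_eq_zero {a q : ℂ} (ha : a.im = 0) (ha' : a.re ≤ 0) (hq : 0 ≤ q.re) :
    (a / q).re ≤ 0 := by
  rw [div_re, ha, zero_mul, zero_div, add_zero]
  exact div_nonpos_of_nonpos_of_nonneg (mul_nonpos_of_nonpos_of_nonneg ha' hq) (normSq_nonneg q)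

theorem stmt4_general (p : ℂ → ℂ) (c γ : ℝ)
    (hp : DifferentiableOn ℂ p (ball (0 : ℂ) 1)) (hp0 : p 0 = 1)
    (hcγ : 0 < c + γ) (hγ1 : γ < 1)
    (h : ∀ z ∈ ball (0 : ℂ) 1, γ < (p z + z * deriv p z / ((c : ℂ) + p z)).re) :
    ∀ z ∈ ball (0 : ℂ) 1, γ < (p z).re := by
  intro z hz
  by_contra! hzγ
  obtain ⟨z₀, hz₀, hpz₀, hbound⟩ := exists_mem_ball_eq_forall_mem_closedBall_le
    (g := fun w ↦ (p w).re) (continuous_re.comp_continuousOn hp.continuousOn)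
    (by simpa [hp0] using hγ1) hz hzγ
  have hd : DifferentiableAt ℂ p z₀ := hp.differentiableAt (isOpen_ball.mem_nhds hz₀)
  have hmin : IsMinOn (fun w ↦ (p w).re) (closedBall 0 ‖z₀‖) z₀ := fun w hw ↦ by
    simpa [hpz₀] using hbound w hw
  have hquot : (z₀ * deriv p z₀ / ((c : ℂ) + p z₀)).re ≤ 0 :=
    re_div_nonpos_of_im_eq_zero
      (im_mul_deriv_eq_zero_of_isMinOn_sphere hd (hmin.on_subset sphere_subset_closedBall))
      (re_mul_deriv_nonpos_of_isMinOn_closedBall hd hmin)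
      (by simpa [hpz₀] using hcγ.le)
  have hz₀γ := h z₀ hz₀
  rw [add_re, hpz₀] at hz₀γ
  linarith

theorem stmt4 (p : ℂ → ℂ) (c γ : ℝ)
    (hp : DifferentiableOn ℂ p (ball (0 : ℂ) 1)) (hp0 : p 0 = 1)
    (hc : -1 < c) (hcγ : 0 < c + γ) (hγ0 : 0 ≤ γ) (hγ1 : γ < 1)
    (hne : ∀ z ∈ ball (0 : ℂ) 1, p z + (c : ℂ) ≠ 0)
    (h : ∀ z ∈ ball (0 : ℂ) 1, γ < (p z + z * deriv p z / ((c : ℂ) + p z)).re) :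
    ∀ z ∈ ball (0 : ℂ) 1, γ < (p z).re :=
  stmt4_general p c γ hp hp0 hcγ hγ1 h
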